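/- L²-type Lipschitz estimate for the Maxwellian: for U₁=(h₁,h₁u₁), U₂=(h₂,h₂u₂) with h₁,h₂ ≥ 0, ∫_ℝ M(U₁,ξ)·(M(U₁,ξ) − M(U₂,ξ))² dξ ≤ (3/(g²π²))·( g(h₂−h₁)² + min(h₁,h₂)(u₂−u₁)² ). -/

import Mathlib

open MeasureTheory Real

noncomputable def Mx (g h u ξ : ℝ) : ℝ := (1/(g*π)) * Real.sqrt (max 0 (2*g*h - (ξ-u)^2))
noncomputable def H0 (g f ξ : ℝ) : ℝ := ξ^2*f/2 + (g^2*π^2/6)*f^3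
noncomputable def dH0 (g f ξ : ℝ) : ℝ := ξ^2/2 + (g^2*π^2/2)*f^2

/-!
The kinetic entropy `H0 g f ξ` is cubic in `f`, so its Bregman divergence is
`(g²π²/6) (f - m)² (f + 2m)`. By the Gibbs principle, `dH0` at the Maxwellian `M_A` equals the
affine function `η_A ξ = g h_A - u_A²/2 + u_A ξ` where `M_A > 0` and exceeds it where `M_A = 0`,
so for `f ≥ 0` the divergence is at most `H0 f - H0 M_A - η_A (f - M_A)`. With `f = M_B`, the
integral of this bound involves only mass, momentum and energy (`∫ H0 M = g h²/2 + h u²/2`) and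
equals `(g (h_B - h_A)² + h_B (u_B - u_A)²) / 2`. Finally `M₁ ≤ M_B + 2 M_A` for either labelling
of the two states, and `B` is taken to be the shallower one.
-/

open intervalIntegral in
lemma integral_sq_mul_sqrt_one_sub_sq : ∫ x in (-1 : ℝ)..1, x ^ 2 * √(1 - x ^ 2) = π / 8 :=
  calc
    _ = ∫ x in sin (-(π / 2))..sin (π / 2), x ^ 2 * √(1 - x ^ 2) := by
          rw [sin_neg, sin_pi_div_two]
    _ = ∫ x in (-(π / 2))..(π / 2), sin x ^ 2 * √(1 - sin x ^ 2) * cos x :=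
          (integral_comp_mul_deriv (fun x _ => hasDerivAt_sin x) continuousOn_cos
            (by fun_prop)).symm
    _ = ∫ x in (-(π / 2))..(π / 2), sin x ^ 2 * cos x ^ 2 := by
          refine integral_congr_ae (ae_of_all _ fun x h => ?_)
          rw [Set.uIoc_of_le (neg_le_self (half_pos pi_pos).le), Set.mem_Ioc] at h
          rw [← cos_eq_sqrt_one_sub_sin_sq h.1.le h.2]
          ring
    _ = π / 8 := by
          have h4 : 4 * (π / 2) = (2 : ℕ) * π := by push_cast; ring
          simp [h4, mul_neg]

noncomputable def semicircle (r s : ℝ) : ℝ := √(max 0 (r ^ 2 - s ^ 2))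

lemma continuous_semicircle (r : ℝ) : Continuous (semicircle r) := by
  unfold semicircle; fun_prop

lemma semicircle_eq_zero {r s : ℝ} (h : r ^ 2 ≤ s ^ 2) : semicircle r s = 0 := by
  rw [semicircle, max_eq_left (by linarith), sqrt_zero]

lemma semicircle_neg (r s : ℝ) : semicircle r (-s) = semicircle r s := by
  simp [semicircle]

lemma hasCompactSupport_semicircle (r : ℝ) : HasCompactSupport (semicircle r) := by
  refine HasCompactSupport.intro (isCompact_Icc (a := -|r|) (b := |r|)) fun s hs => ?_
  rw [Set.mem_Icc, ← abs_le, not_le, ← abs_abs r, ← sq_lt_sq] at hs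
  exact semicircle_eq_zero (sq_abs r ▸ hs.le)

lemma semicircle_mul {r : ℝ} (hr : 0 ≤ r) (y : ℝ) :
    semicircle r (r * y) = r * semicircle 1 y := by
  have : max 0 (r ^ 2 - (r * y) ^ 2) = r ^ 2 * max 0 (1 ^ 2 - y ^ 2) := by
    rw [mul_max_of_nonneg _ _ (sq_nonneg r)]; ring_nf
  rw [semicircle, semicircle, this, sqrt_mul (sq_nonneg r), sqrt_sq hr]

lemma integrable_mul_semicircle {P : ℝ → ℝ} (hP : Continuous P) (r : ℝ) :
    Integrable (fun s => P s * semicircle r s) :=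
  (hP.mul (continuous_semicircle r)).integrable_of_hasCompactSupport
    (hasCompactSupport_semicircle r).mul_left

lemma integral_mul_semicircle_one_eq_intervalIntegral (f : ℝ → ℝ) :
    ∫ y, f y * semicircle 1 y = ∫ y in (-1)..1, f y * √(1 - y ^ 2) := by
  rw [intervalIntegral.integral_of_le (by norm_num),
    ← setIntegral_eq_integral_of_forall_compl_eq_zero (s := Set.Ioc (-1) 1)]
  · refine setIntegral_congr_fun measurableSet_Ioc fun y hy => ?_
    rw [semicircle, one_pow, max_eq_right]
    nlinarith [hy.1, hy.2]
  · intro y hy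
    rw [Set.mem_Ioc, not_and_or, not_lt, not_le] at hy
    rw [semicircle_eq_zero, mul_zero]
    rcases hy with hy | hy <;> nlinarith

lemma integral_pow_mul_semicircle (k : ℕ) {r : ℝ} (hr : 0 ≤ r) :
    ∫ s, s ^ k * semicircle r s = r ^ (k + 2) * ∫ y in (-1)..1, y ^ k * √(1 - y ^ 2) := by
  rcases hr.eq_or_lt with rfl | hr
  · have (s : ℝ) : semicircle 0 s = 0 := semicircle_eq_zero (by simp [sq_nonneg])
    simp [this]
  calc ∫ s, s ^ k * semicircle r s = r * ∫ y, (r * y) ^ k * semicircle r (r * y) := by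
        rw [Measure.integral_comp_mul_left (fun s => s ^ k * semicircle r s), abs_inv,
          abs_of_pos hr, smul_eq_mul, mul_inv_cancel_left₀ hr.ne']
    _ = r * ∫ y, r ^ (k + 1) * (y ^ k * semicircle 1 y) := by
        simp_rw [semicircle_mul hr.le]; ring_nf
    _ = r ^ (k + 2) * ∫ y in (-1)..1, y ^ k * √(1 - y ^ 2) := by
        rw [integral_const_mul, integral_mul_semicircle_one_eq_intervalIntegral]; ring

lemma integral_mul_semicircle (r : ℝ) : ∫ s, s * semicircle r s = 0 := by
  have h := integral_neg_eq_self (fun s => s * semicircle r s) volume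
  simp only [semicircle_neg, neg_mul, integral_neg] at h
  linarith

lemma integral_semicircle {r : ℝ} (hr : 0 ≤ r) : ∫ s, semicircle r s = π * r ^ 2 / 2 := by
  have h := integral_pow_mul_semicircle 0 hr
  simp only [pow_zero, one_mul, zero_add, integral_sqrt_one_sub_sq] at h
  rw [h]; ring

lemma integral_sq_mul_semicircle {r : ℝ} (hr : 0 ≤ r) :
    ∫ s, s ^ 2 * semicircle r s = π * r ^ 4 / 8 := by
  rw [integral_pow_mul_semicircle 2 hr, integral_sq_mul_sqrt_one_sub_sq]; ring

lemma integral_quadratic_mul_semicircle {r : ℝ} (hr : 0 ≤ r) (a b d : ℝ) :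
    ∫ s, (a + b * s + d * s ^ 2) * semicircle r s = π * (a * r ^ 2 / 2 + d * r ^ 4 / 8) := by
  have h0 : Integrable (semicircle r) :=
    (continuous_semicircle r).integrable_of_hasCompactSupport (hasCompactSupport_semicircle r)
  have h1 : Integrable (fun s => s * semicircle r s) := integrable_mul_semicircle continuous_id r
  have h2 := integrable_mul_semicircle (continuous_pow 2) r
  calc ∫ s, (a + b * s + d * s ^ 2) * semicircle r s
      = ∫ s, a * semicircle r s + b * (s * semicircle r s) + d * (s ^ 2 * semicircle r s) := by
        congr 1; funext s; ring
    _ = a * (∫ s, semicircle r s) + b * (∫ s, s * semicircle r s)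
          + d * ∫ s, s ^ 2 * semicircle r s := by
        rw [integral_add ?_ (h2.const_mul d), integral_add (h0.const_mul a) (h1.const_mul b),
          integral_const_mul, integral_const_mul, integral_const_mul]
        exact (h0.const_mul a).add (h1.const_mul b)
    _ = π * (a * r ^ 2 / 2 + d * r ^ 4 / 8) := by
        rw [integral_semicircle hr, integral_mul_semicircle, integral_sq_mul_semicircle hr]; ring

lemma Mx_eq_semicircle {g h : ℝ} (hg : 0 ≤ g) (hh : 0 ≤ h) (u ξ : ℝ) :
    Mx g h u ξ = (g * π)⁻¹ * semicircle √(2 * g * h) (ξ - u) := by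
  rw [Mx, semicircle, sq_sqrt (by positivity), one_div]

lemma continuous_Mx (g h u : ℝ) : Continuous (Mx g h u) := by
  unfold Mx; fun_prop

lemma Mx_nonneg {g : ℝ} (hg : 0 ≤ g) (h u ξ : ℝ) : 0 ≤ Mx g h u ξ := by
  unfold Mx; positivity

lemma integrable_mul_Mx {g h : ℝ} (hg : 0 ≤ g) (hh : 0 ≤ h) (u : ℝ) {P : ℝ → ℝ}
    (hP : Continuous P) : Integrable (fun ξ => P ξ * Mx g h u ξ) := by
  have := ((integrable_mul_semicircle (hP.comp (continuous_add_const u))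
    √(2 * g * h)).comp_sub_right u).const_mul (g * π)⁻¹
  refine this.congr (ae_of_all _ fun ξ => ?_)
  simp only [Function.comp, sub_add_cancel, Mx_eq_semicircle hg hh]
  ring

lemma integral_quadratic_mul_Mx {g h : ℝ} (hg : 0 < g) (hh : 0 ≤ h) (u a b d : ℝ) :
    ∫ ξ, (a + b * ξ + d * ξ ^ 2) * Mx g h u ξ
      = a * h + b * (h * u) + d * (g * h ^ 2 / 2 + h * u ^ 2) := by
  set r := √(2 * g * h)
  have hr : r ^ 2 = 2 * g * h := sq_sqrt (by positivity)
  calc ∫ ξ, (a + b * ξ + d * ξ ^ 2) * Mx g h u ξ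
      = ∫ ξ, (g * π)⁻¹ * (fun s => ((a + b * u + d * u ^ 2) + (b + 2 * d * u) * s
          + d * s ^ 2) * semicircle r s) (ξ - u) := by
        congr 1; funext ξ; rw [Mx_eq_semicircle hg.le hh]; ring
    _ = (g * π)⁻¹ * (π * ((a + b * u + d * u ^ 2) * r ^ 2 / 2 + d * r ^ 4 / 8)) := by
        rw [integral_const_mul, integral_sub_right_eq_self (fun s => ((a + b * u + d * u ^ 2)
          + (b + 2 * d * u) * s + d * s ^ 2) * semicircle r s),
          integral_quadratic_mul_semicircle (sqrt_nonneg _)]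
    _ = a * h + b * (h * u) + d * (g * h ^ 2 / 2 + h * u ^ 2) := by
        rw [show r ^ 4 = (r ^ 2) ^ 2 by ring, hr]; field_simp; ring

lemma sq_mul_sq_Mx {g : ℝ} (hg : g ≠ 0) (h u ξ : ℝ) :
    (g * π) ^ 2 * Mx g h u ξ ^ 2 = max 0 (2 * g * h - (ξ - u) ^ 2) := by
  rw [Mx, mul_pow (1 / (g * π)), sq_sqrt (le_max_left _ _)]
  field_simp

lemma max_zero_mul_Mx (g h u ξ : ℝ) :
    max 0 (2 * g * h - (ξ - u) ^ 2) * Mx g h u ξ = (2 * g * h - (ξ - u) ^ 2) * Mx g h u ξ := by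
  rcases le_total 0 (2 * g * h - (ξ - u) ^ 2) with hX | hX
  · rw [max_eq_right hX]
  · rw [Mx, max_eq_left hX, sqrt_zero]; ring

lemma H0_Mx {g : ℝ} (hg : g ≠ 0) (h u ξ : ℝ) :
    H0 g (Mx g h u ξ) ξ = (ξ ^ 2 / 2 + (2 * g * h - (ξ - u) ^ 2) / 6) * Mx g h u ξ := by
  rw [H0]
  linear_combination (Mx g h u ξ / 6) * sq_mul_sq_Mx hg h u ξ + max_zero_mul_Mx g h u ξ / 6

lemma dH0_Mx {g : ℝ} (hg : g ≠ 0) (h u ξ : ℝ) :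
    dH0 g (Mx g h u ξ) ξ = ξ ^ 2 / 2 + max 0 (2 * g * h - (ξ - u) ^ 2) / 2 := by
  rw [dH0, ← sq_mul_sq_Mx hg]; ring

lemma affine_mul_sub_Mx_le_dH0_Mx_mul_sub {g : ℝ} (hg : g ≠ 0) (h u ξ : ℝ) {f : ℝ}
    (hf : 0 ≤ f) :
    (g * h - u ^ 2 / 2 + u * ξ) * (f - Mx g h u ξ)
      ≤ dH0 g (Mx g h u ξ) ξ * (f - Mx g h u ξ) := by
  set X := 2 * g * h - (ξ - u) ^ 2
  have hgap : dH0 g (Mx g h u ξ) ξ * (f - Mx g h u ξ)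
      - (g * h - u ^ 2 / 2 + u * ξ) * (f - Mx g h u ξ) = (max 0 X - X) / 2 * f := by
    rw [dH0_Mx hg]; linear_combination (-1 / 2 : ℝ) * max_zero_mul_Mx g h u ξ
  have : 0 ≤ (max 0 X - X) / 2 * f := mul_nonneg (by linarith [le_max_right 0 X]) hf
  linarith

lemma H0_sub_H0_sub_dH0_mul (g f m ξ : ℝ) :
    H0 g f ξ - H0 g m ξ - dH0 g m ξ * (f - m)
      = g ^ 2 * π ^ 2 / 6 * ((f - m) ^ 2 * (f + 2 * m)) := by
  unfold H0 dH0; ring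

lemma integrable_H0_Mx {g h : ℝ} (hg : 0 < g) (hh : 0 ≤ h) (u : ℝ) :
    Integrable (fun ξ => H0 g (Mx g h u ξ) ξ) := by
  simp_rw [H0_Mx hg.ne']
  exact integrable_mul_Mx hg.le hh u (by fun_prop)

lemma integral_H0_Mx {g h : ℝ} (hg : 0 < g) (hh : 0 ≤ h) (u : ℝ) :
    ∫ ξ, H0 g (Mx g h u ξ) ξ = g * h ^ 2 / 2 + h * u ^ 2 / 2 := by
  have (ξ : ℝ) : H0 g (Mx g h u ξ) ξ
      = ((2 * g * h - u ^ 2) / 6 + u / 3 * ξ + 1 / 3 * ξ ^ 2) * Mx g h u ξ := by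
    rw [H0_Mx hg.ne']; ring
  simp_rw [this]
  rw [integral_quadratic_mul_Mx hg hh]; ring

lemma integral_affine_mul_Mx {g h : ℝ} (hg : 0 < g) (hh : 0 ≤ h) (u a b : ℝ) :
    ∫ ξ, (a + b * ξ) * Mx g h u ξ = a * h + b * (h * u) := by
  simpa using integral_quadratic_mul_Mx hg hh u a b 0

lemma integral_mul_sq_sub_Mx_le {g hA hB : ℝ} (hg : 0 < g) (hhA : 0 ≤ hA) (hhB : 0 ≤ hB)
    (uA uB : ℝ) {w : ℝ → ℝ} (hw0 : ∀ ξ, 0 ≤ w ξ)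
    (hw : ∀ ξ, w ξ ≤ Mx g hB uB ξ + 2 * Mx g hA uA ξ) :
    ∫ ξ, w ξ * (Mx g hB uB ξ - Mx g hA uA ξ) ^ 2
      ≤ 3 / (g ^ 2 * π ^ 2) * (g * (hB - hA) ^ 2 + hB * (uB - uA) ^ 2) := by
  set MA := Mx g hA uA
  set MB := Mx g hB uB
  set R := fun ξ => H0 g (MB ξ) ξ - H0 g (MA ξ) ξ
    - ((g * hA - uA ^ 2 / 2 + uA * ξ) * MB ξ - (g * hA - uA ^ 2 / 2 + uA * ξ) * MA ξ)
  have hc : 0 < g ^ 2 * π ^ 2 / 6 := by positivity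
  have hHA := integrable_H0_Mx hg hhA uA
  have hHB := integrable_H0_Mx hg hhB uB
  have hηA := integrable_mul_Mx hg.le hhA uA (P := fun ξ => g * hA - uA ^ 2 / 2 + uA * ξ)
    (by fun_prop)
  have hηB := integrable_mul_Mx hg.le hhB uB (P := fun ξ => g * hA - uA ^ 2 / 2 + uA * ξ)
    (by fun_prop)
  have hR_le (ξ : ℝ) : w ξ * (MB ξ - MA ξ) ^ 2 ≤ (g ^ 2 * π ^ 2 / 6)⁻¹ * R ξ := by
    rw [le_inv_mul_iff₀ hc]
    calc g ^ 2 * π ^ 2 / 6 * (w ξ * (MB ξ - MA ξ) ^ 2)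
        ≤ g ^ 2 * π ^ 2 / 6 * ((MB ξ - MA ξ) ^ 2 * (MB ξ + 2 * MA ξ)) := by
          rw [mul_comm ((MB ξ - MA ξ) ^ 2)]
          gcongr
          exact hw ξ
      _ ≤ R ξ := by
          rw [← H0_sub_H0_sub_dH0_mul g (MB ξ) (MA ξ) ξ]
          have := affine_mul_sub_Mx_le_dH0_Mx_mul_sub hg.ne' hA uA ξ (Mx_nonneg hg.le hB uB ξ)
          simp only [R]; linarith
  have hR : Integrable R := (hHB.sub hHA).sub (hηB.sub hηA)
  have hR_int : ∫ ξ, R ξ = (g * (hB - hA) ^ 2 + hB * (uB - uA) ^ 2) / 2 := by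
    rw [integral_sub ?_ ?_, integral_sub hHB hHA, integral_sub hηB hηA,
      integral_H0_Mx hg hhA, integral_H0_Mx hg hhB, integral_affine_mul_Mx hg hhA,
      integral_affine_mul_Mx hg hhB]
    · ring
    exacts [hHB.sub hHA, hηB.sub hηA]
  calc ∫ ξ, w ξ * (MB ξ - MA ξ) ^ 2
      ≤ ∫ ξ, (g ^ 2 * π ^ 2 / 6)⁻¹ * R ξ :=
        integral_mono_of_nonneg (ae_of_all _ fun ξ => mul_nonneg (hw0 ξ) (sq_nonneg _))
          (hR.const_mul _) (ae_of_all _ hR_le)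
    _ = 3 / (g ^ 2 * π ^ 2) * (g * (hB - hA) ^ 2 + hB * (uB - uA) ^ 2) := by
        rw [integral_const_mul, hR_int]; field_simp; ring

theorem maxwellian_L2_lipschitz (g h₁ h₂ u₁ u₂ : ℝ) (hg : 0 < g) (hh1 : 0 ≤ h₁) (hh2 : 0 ≤ h₂) :
    (∫ ξ : ℝ, Mx g h₁ u₁ ξ * (Mx g h₁ u₁ ξ - Mx g h₂ u₂ ξ)^2)
    ≤ (3/(g^2*π^2)) * (g*(h₂-h₁)^2 + min h₁ h₂ * (u₂-u₁)^2) := by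
  have hM₁ := Mx_nonneg hg.le h₁ u₁
  have hM₂ := Mx_nonneg hg.le h₂ u₂
  rcases le_total h₁ h₂ with h12 | h21
  · convert integral_mul_sq_sub_Mx_le hg hh2 hh1 u₂ u₁ hM₁
      (fun ξ => by linarith [hM₂ ξ]) using 2
    rw [min_eq_left h12]; ring
  · convert integral_mul_sq_sub_Mx_le hg hh1 hh2 u₁ u₂ hM₁
      (fun ξ => by linarith [hM₁ ξ, hM₂ ξ]) using 3
    · ring
    · rw [min_eq_right h21]
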